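/- Let n ≥ 1, let V = {1,…,n}, let E be a set of pairs (j,k) with j < k and weights w_{jk} ≥ 0, and suppose the graph G = (V,E) is bipartite. Define F : ℝ^n → ℝ by F(z_1,…,z_n) = −(1/4)·Σ_{(j,k)∈E} w_{jk}·(z_j + z_k + z_j z_k), and for 0 ≤ q ≤ ⌊n/2⌋ let F_q denote the maximum of F over z ∈ {−1,+1}^n having exactly q coordinates equal to +1, attained at some z^q. Then (1) F_0 = F_1 = ⋯ = F_{⌊n/2⌋} = (1/4)·Σ_{(j,k)∈E} w_{jk}, and (2) for every p ∈ [0,1] and every 0 ≤ q ≤ ⌊n/2⌋, F(p z^q_1,…,p z^q_n) ≥ p²·F_q. -/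

import Mathlib

/-!
Since `a + b + ab = (1 + a)(1 + b) - 1`, the cost is `(1/4) Σ w` minus the penalty
`(1/4) Σ w_e (1 + z_j)(1 + z_k)`, which is nonnegative on `±1` vectors and vanishes when the `+1`
coordinates form an independent set. A bipartite graph on `n` vertices has independent sets of
every size `q ≤ ⌊n/2⌋` (inside its larger side), so the bound `(1/4) Σ w` is attained for every
`q`, and every maximizer has zero penalty. For the scaling,
`F(p z) - p² F(z) = -(1/4) p (1 - p) Σ w_e (z_j + z_k)`, and
`2 (a + b) = (1 + a)(1 + b) - (1 - a)(1 - b)` makes this sum `≤ 0` once the penalty is zero.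
-/

noncomputable section

namespace BipartiteCost

open Finset

variable {V : Type*}

def edgeCost (E : Finset (V × V)) (w : V × V → ℝ) (z : V → ℝ) : ℝ :=
  -(1/4) * ∑ e ∈ E, w e * (z e.1 + z e.2 + z e.1 * z e.2)

def signVector [DecidableEq V] (S : Finset V) (j : V) : ℝ := if j ∈ S then 1 else -1

theorem signVector_eq_one_or_neg_one [DecidableEq V] (S : Finset V) (j : V) :
    signVector S j = 1 ∨ signVector S j = -1 := by
  unfold signVector
  split_ifs <;> simp

theorem ncard_setOf_signVector_eq_one [DecidableEq V] (S : Finset V) :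
    ({j | signVector S j = 1} : Set V).ncard = S.card := by
  have hset : {j | signVector S j = 1} = (S : Set V) := by
    ext j
    by_cases h : j ∈ S <;> simp [signVector, h]
    norm_num
  rw [hset, Set.ncard_coe_finset]

theorem exists_card_eq_of_bipartite [Fintype V] [DecidableEq V] (E : Finset (V × V))
    (A : Finset V) (hbip : ∀ e ∈ E, (e.1 ∈ A ∧ e.2 ∉ A) ∨ (e.1 ∉ A ∧ e.2 ∈ A))
    {q : ℕ} (hq : q ≤ Fintype.card V / 2) :
    ∃ S : Finset V, S.card = q ∧ ∀ e ∈ E, e.1 ∉ S ∨ e.2 ∉ S := by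
  have of_subset : ∀ T : Finset V, (∀ e ∈ E, e.1 ∉ T ∨ e.2 ∉ T) → q ≤ T.card →
      ∃ S : Finset V, S.card = q ∧ ∀ e ∈ E, e.1 ∉ S ∨ e.2 ∉ S := by
    intro T hT hqT
    obtain ⟨S, hST, hS⟩ := exists_subset_card_eq hqT
    exact ⟨S, hS, fun e he => (hT e he).imp (mt (@hST _)) (mt (@hST _))⟩
  have hsides := card_add_card_compl A
  by_cases hA : q ≤ A.card
  · exact of_subset A (fun e he => by have := hbip e he; tauto) hA
  · exact of_subset Aᶜ (fun e he => by simp only [mem_compl, not_not]; have := hbip e he; tauto)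
      (by omega)

section Cost

variable (E : Finset (V × V)) (w : V × V → ℝ)

theorem edgeCost_eq_sub_penalty (z : V → ℝ) :
    edgeCost E w z =
      (1/4) * ∑ e ∈ E, w e - (1/4) * ∑ e ∈ E, w e * ((1 + z e.1) * (1 + z e.2)) := by
  have hterm : ∀ e : V × V, w e * (z e.1 + z e.2 + z e.1 * z e.2) =
      w e * ((1 + z e.1) * (1 + z e.2)) - w e := fun e => by ring
  simp only [edgeCost, hterm, sum_sub_distrib]
  ring

theorem edgeCost_smul_sub (p : ℝ) (z : V → ℝ) :
    edgeCost E w (fun j => p * z j) - p ^ 2 * edgeCost E w z =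
      -(1/4) * (p * (1 - p)) * ∑ e ∈ E, w e * (z e.1 + z e.2) := by
  simp only [edgeCost, mul_sum, ← sum_sub_distrib]
  exact sum_congr rfl fun e _ => by ring

variable {E w}

theorem edgeCost_le (hw : ∀ e ∈ E, 0 ≤ w e) {z : V → ℝ} (hz : ∀ j, -1 ≤ z j) :
    edgeCost E w z ≤ (1/4) * ∑ e ∈ E, w e := by
  have hpenalty : 0 ≤ ∑ e ∈ E, w e * ((1 + z e.1) * (1 + z e.2)) :=
    sum_nonneg fun e he => mul_nonneg (hw e he)
      (mul_nonneg (by linarith [hz e.1]) (by linarith [hz e.2]))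
  rw [edgeCost_eq_sub_penalty]
  linarith

theorem edgeCost_signVector [DecidableEq V] {S : Finset V} (hS : ∀ e ∈ E, e.1 ∉ S ∨ e.2 ∉ S) :
    edgeCost E w (signVector S) = (1/4) * ∑ e ∈ E, w e := by
  have hpenalty : ∑ e ∈ E, w e * ((1 + signVector S e.1) * (1 + signVector S e.2)) = 0 :=
    sum_eq_zero fun e he => by rcases hS e he with h | h <;> simp [signVector, h]
  rw [edgeCost_eq_sub_penalty, hpenalty]
  ring

theorem mul_edgeCost_le_edgeCost_mul (hw : ∀ e ∈ E, 0 ≤ w e) {z : V → ℝ} (hz : ∀ j, z j ≤ 1)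
    (hmax : (1/4) * ∑ e ∈ E, w e ≤ edgeCost E w z) {p : ℝ} (hp0 : 0 ≤ p) (hp1 : p ≤ 1) :
    p ^ 2 * edgeCost E w z ≤ edgeCost E w (fun j => p * z j) := by
  have hpenalty : ∑ e ∈ E, w e * ((1 + z e.1) * (1 + z e.2)) ≤ 0 := by
    rw [edgeCost_eq_sub_penalty] at hmax
    linarith
  have hterm : ∀ e ∈ E, w e * (z e.1 + z e.2) ≤ w e * ((1 + z e.1) * (1 + z e.2)) / 2 := by
    intro e he
    have hsplit : w e * (z e.1 + z e.2) =
        (w e * ((1 + z e.1) * (1 + z e.2)) - w e * ((1 - z e.1) * (1 - z e.2))) / 2 := by ring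
    have := mul_nonneg (hw e he) (mul_nonneg (sub_nonneg.2 (hz e.1)) (sub_nonneg.2 (hz e.2)))
    linarith
  have hsum : ∑ e ∈ E, w e * (z e.1 + z e.2) ≤ 0 := by
    calc ∑ e ∈ E, w e * (z e.1 + z e.2)
        ≤ ∑ e ∈ E, w e * ((1 + z e.1) * (1 + z e.2)) / 2 := sum_le_sum hterm
      _ = (∑ e ∈ E, w e * ((1 + z e.1) * (1 + z e.2))) / 2 := (sum_div ..).symm
      _ ≤ 0 := by linarith
  have hdiff := edgeCost_smul_sub E w p z
  have := mul_nonneg (mul_nonneg hp0 (sub_nonneg.2 hp1)) (neg_nonneg.2 hsum)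
  linarith

end Cost

end BipartiteCost

end

open BipartiteCost

theorem bipartite_fixed_particle_cost_scaling
    (n : ℕ)
    (E : Finset (Fin n × Fin n))
    (w : Fin n × Fin n → ℝ) (hw : ∀ e ∈ E, 0 ≤ w e)
    (A : Finset (Fin n))
    (hbip : ∀ e ∈ E, (e.1 ∈ A ∧ e.2 ∉ A) ∨ (e.1 ∉ A ∧ e.2 ∈ A))
    (F : (Fin n → ℝ) → ℝ)
    (hF : ∀ z, F z = -(1/4) * ∑ e ∈ E, w e * (z e.1 + z e.2 + z e.1 * z e.2)) :
    ∀ q : ℕ, q ≤ n / 2 →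
      (IsGreatest {v : ℝ | ∃ z : Fin n → ℝ, (∀ j, z j = 1 ∨ z j = -1) ∧
          ({j : Fin n | z j = 1} : Set (Fin n)).ncard = q ∧ v = F z}
        ((1/4) * ∑ e ∈ E, w e)) ∧
      ∀ zq : Fin n → ℝ, (∀ j, zq j = 1 ∨ zq j = -1) →
        ({j : Fin n | zq j = 1} : Set (Fin n)).ncard = q →
        (∀ z : Fin n → ℝ, (∀ j, z j = 1 ∨ z j = -1) →
          ({j : Fin n | z j = 1} : Set (Fin n)).ncard = q → F z ≤ F zq) →
        ∀ p ∈ Set.Icc (0:ℝ) 1, F (fun j => p * zq j) ≥ p ^ 2 * F zq := by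
  obtain rfl : F = edgeCost E w := funext hF
  intro q hq
  obtain ⟨S, hSq, hS⟩ := exists_card_eq_of_bipartite E A hbip (q := q) (by simpa using hq)
  have hsign := signVector_eq_one_or_neg_one S
  have hcard : ({j | signVector S j = 1} : Set (Fin n)).ncard = q :=
    hSq ▸ ncard_setOf_signVector_eq_one S
  have hopt := edgeCost_signVector (w := w) hS
  refine ⟨⟨⟨signVector S, hsign, hcard, hopt.symm⟩, ?_⟩, ?_⟩
  · rintro v ⟨z, hz, -, rfl⟩
    exact edgeCost_le hw fun j => by rcases hz j with h | h <;> linarith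
  · intro zq hzq _ hmax p ⟨hp0, hp1⟩
    exact mul_edgeCost_le_edgeCost_mul hw (fun j => by rcases hzq j with h | h <;> linarith)
      (hopt ▸ hmax _ hsign hcard) hp0 hp1
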